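/- Every butterfly is strongly perfect. -/

import Mathlib

open SimpleGraph

section Defs

variable {V : Type*}

/-- A stable (independent) set of a graph. -/
def IsStable (G : SimpleGraph V) (S : Set V) : Prop :=
  ∀ ⦃u v : V⦄, u ∈ S → v ∈ S → ¬ G.Adj u v

/-- `C` is a maximal clique of the induced subgraph `G[W]`. -/
def IsMaxCliqueOn (G : SimpleGraph V) (W C : Set V) : Prop :=
  C ⊆ W ∧ G.IsClique C ∧ ∀ D : Set V, D ⊆ W → G.IsClique D → C ⊆ D → D = C

/-- `C` is a maximal clique of `G`. -/
def IsMaxClique (G : SimpleGraph V) (C : Set V) : Prop :=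
  G.IsClique C ∧ ∀ D : Set V, G.IsClique D → C ⊆ D → D = C

/-- `S` is a strong stable set of the induced subgraph `G[W]`. -/
def StrongStableOn (G : SimpleGraph V) (W S : Set V) : Prop :=
  S ⊆ W ∧ IsStable G S ∧ ∀ C : Set V, IsMaxCliqueOn G W C → C.Nonempty → (S ∩ C).Nonempty

/-- `S` is a strong stable set of `G`. -/
def StrongStable (G : SimpleGraph V) (S : Set V) : Prop :=
  IsStable G S ∧ ∀ C : Set V, IsMaxClique G C → C.Nonempty → (S ∩ C).Nonempty

/-- The induced subgraph `G[W]` is strongly perfect. -/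
def StronglyPerfectOn (G : SimpleGraph V) (W : Set V) : Prop :=
  ∀ U : Set V, U ⊆ W → ∃ S : Set V, StrongStableOn G U S

/-- `G` is strongly perfect: every induced subgraph has a strong stable set. -/
def StronglyPerfect (G : SimpleGraph V) : Prop :=
  ∀ U : Set V, ∃ S : Set V, StrongStableOn G U S

/-- `G` is minimal non-strongly-perfect. -/
def MinimalNSP (G : SimpleGraph V) : Prop :=
  ¬ StronglyPerfect G ∧ ∀ W : Set V, W ≠ Set.univ → StronglyPerfectOn G W

end Defs

/-- Vertices of a butterfly with path-lengths `α = |P₁|`, `β = |P₂|`, `γ = |P₃|`: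
`none` is the head `v`, and `some i` is the `i`-th vertex of the induced path
`a_1-…-a_k(=b_1)-…-b_ℓ(=c_1)-…-c_m` of total length `α+β+γ`. -/
abbrev ButterflyV (a b c : ℕ) := Option (Fin (a + b + c + 1))

/-- The butterfly: the head `v` is complete to `P₂ ∪ {a_1, c_m}`, i.e. to the path
vertices with index `0`, `α+β+γ`, or in `[α, α+β]`, and no other edges. -/
def butterflyRel (a b c : ℕ) : ButterflyV a b c → ButterflyV a b c → Prop
  | some i, some j => (j : ℕ) = (i : ℕ) + 1
  | none, some i => (i : ℕ) = 0 ∨ (i : ℕ) = a + b + c ∨ (a ≤ (i : ℕ) ∧ (i : ℕ) ≤ a + b)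
  | _, _ => False

def butterfly (a b c : ℕ) : SimpleGraph (ButterflyV a b c) :=
  SimpleGraph.fromRel (butterflyRel a b c)

/-!
Mark the vertices so that adjacent vertices never share a mark, and take the marked vertices
together with the isolated ones: this meets every edge and every isolated vertex, which are all
the maximal cliques of such a (bipartite) graph. Without the head `v` what remains of the
butterfly is part of a path, marked by the parity of the index. With the head, take `v` together
with such a set on the vertices outside `N[v]`, namely the inner vertices of `P₁` and `P₃`; a
maximal clique missing `v` has a vertex outside `N[v]`, and it is met as long as the ends of `P₁`
and `P₃` next to `N(v)` are marked. The parity conditions on the three paths are exactly what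
makes these ends marked.
-/

section StrongStable

variable {V : Type*} {G : SimpleGraph V} {U W C M : Set V}

theorem IsMaxCliqueOn.mem_of_forall_adj (hC : IsMaxCliqueOn G W C) {z : V} (hz : z ∈ W)
    (hadj : ∀ y ∈ C, z ≠ y → G.Adj z y) : z ∈ C := by
  rw [← hC.2.2 (insert z C) (Set.insert_subset hz hC.1) (hC.2.1.insert hadj)
    (Set.subset_insert z C)]
  exact Set.mem_insert z C

theorem IsMaxCliqueOn.exists_adj_or_isolated (hC : IsMaxCliqueOn G W C) {x : V} (hx : x ∈ C) :
    (∃ y ∈ C, G.Adj x y) ∨ ∀ z ∈ W, ¬ G.Adj x z := by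
  by_contra! h
  obtain ⟨hnadj, z, hz, hxz⟩ := h
  have hzC : z ∈ C := hC.mem_of_forall_adj hz fun y hy hzy => by
    obtain rfl : y = x := by_contra fun hyx => hnadj y hy (hC.2.1 hx hy (Ne.symm hyx))
    exact hxz.symm
  exact hnadj z hzC hxz

def markedOrIsolated (G : SimpleGraph V) (W M : Set V) : Set V :=
  {x ∈ W | x ∈ M ∨ ∀ y ∈ W, ¬ G.Adj x y}

theorem isStable_markedOrIsolated
    (hM : ∀ x ∈ W, ∀ y ∈ W, G.Adj x y → (x ∈ M ↔ y ∉ M)) :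
    IsStable G (markedOrIsolated G W M) := by
  rintro x y ⟨hxW, hxM | hxiso⟩ ⟨hyW, hyM | hyiso⟩ hxy
  · exact (hM x hxW y hyW hxy).1 hxM hyM
  · exact hyiso x hxW hxy.symm
  all_goals exact hxiso y hyW hxy

theorem markedOrIsolated_inter_nonempty (hC : IsMaxCliqueOn G U C) (hWU : W ⊆ U)
    (hM : ∀ x ∈ W, ∀ y ∈ W, G.Adj x y → (x ∈ M ↔ y ∉ M)) {x : V} (hxC : x ∈ C)
    (hxW : x ∈ W) (hout : ∀ y ∈ C, G.Adj x y → y ∉ W → x ∈ M) :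
    (markedOrIsolated G W M ∩ C).Nonempty := by
  rcases hC.exists_adj_or_isolated hxC with ⟨y, hyC, hxy⟩ | hiso
  · by_cases hxM : x ∈ M
    · exact ⟨x, ⟨hxW, .inl hxM⟩, hxC⟩
    by_cases hyW : y ∈ W
    · exact ⟨y, ⟨hyW, .inl (by simpa [hxM] using hM x hxW y hyW hxy)⟩, hyC⟩
    · exact absurd (hout y hyC hxy hyW) hxM
  · exact ⟨x, ⟨hxW, .inr fun z hz => hiso z (hWU hz)⟩, hxC⟩

theorem strongStableOn_markedOrIsolated
    (hM : ∀ x ∈ W, ∀ y ∈ W, G.Adj x y → (x ∈ M ↔ y ∉ M)) :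
    StrongStableOn G W (markedOrIsolated G W M) := by
  refine ⟨fun x hx => hx.1, isStable_markedOrIsolated hM, fun C hC ⟨x, hxC⟩ => ?_⟩
  exact markedOrIsolated_inter_nonempty hC subset_rfl hM hxC (hC.1 hxC)
    fun y hyC _ hyW => absurd (hC.1 hyC) hyW

theorem strongStableOn_insert_markedOrIsolated {v : V} (hv : v ∈ U)
    (hM : ∀ x y, G.Adj x y → ¬ G.Adj v x → ¬ G.Adj v y → (x ∈ M ↔ y ∉ M))
    (hN : ∀ x y, x ≠ v → G.Adj x y → ¬ G.Adj v x → G.Adj v y → x ∈ M) :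
    StrongStableOn G U (insert v (markedOrIsolated G (U \ insert v (G.neighborSet v)) M)) := by
  set W := U \ insert v (G.neighborSet v)
  have hW : ∀ x ∈ W, x ≠ v ∧ ¬ G.Adj v x := fun x hx => by
    simpa [W, not_or, eq_comm] using hx.2
  have hMW : ∀ x ∈ W, ∀ y ∈ W, G.Adj x y → (x ∈ M ↔ y ∉ M) :=
    fun x hx y hy hxy => hM x y hxy (hW x hx).2 (hW y hy).2
  refine ⟨Set.insert_subset hv fun x hx => hx.1.1, ?_, fun C hC _ => ?_⟩
  · rintro x y (rfl | hx) (rfl | hy) hxy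
    · exact G.irrefl hxy
    · exact (hW y hy.1).2 hxy
    · exact (hW x hx.1).2 hxy.symm
    · exact isStable_markedOrIsolated hMW hx hy hxy
  by_cases hvC : v ∈ C
  · exact ⟨v, Set.mem_insert v _, hvC⟩
  obtain ⟨x, hxC, hvx⟩ : ∃ x ∈ C, ¬ G.Adj v x := by
    by_contra! h
    exact hvC (hC.mem_of_forall_adj hv fun y hy _ => h y hy)
  have hxv : x ≠ v := fun h => hvC (h ▸ hxC)
  have hxW : x ∈ W := ⟨hC.1 hxC, by simp [hxv, hvx]⟩
  have hout : ∀ y ∈ C, G.Adj x y → y ∉ W → x ∈ M := fun y hyC hxy hyW => by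
    have hyv : y ≠ v := fun h => hvC (h ▸ hyC)
    have hvy : G.Adj v y := by simpa [W, hC.1 hyC, hyv] using hyW
    exact hN x y hxv hxy hvx hvy
  obtain ⟨z, hz, hzC⟩ := markedOrIsolated_inter_nonempty hC Set.sdiff_subset hMW hxC hxW hout
  exact ⟨z, Set.mem_insert_of_mem v hz, hzC⟩

end StrongStable

section Butterfly

variable {a b c : ℕ}

theorem butterfly_adj_some_some {i j : Fin (a + b + c + 1)} :
    (butterfly a b c).Adj (some i) (some j) ↔ (j : ℕ) = i + 1 ∨ (i : ℕ) = j + 1 := by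
  simp only [butterfly, fromRel_adj, butterflyRel, ne_eq, Option.some.injEq, Fin.ext_iff]
  omega

theorem butterfly_adj_none_some {i : Fin (a + b + c + 1)} :
    (butterfly a b c).Adj none (some i) ↔
      (i : ℕ) = 0 ∨ (i : ℕ) = a + b + c ∨ (a ≤ i ∧ (i : ℕ) ≤ a + b) := by
  simp [butterfly, butterflyRel]

def butterflyEvenMarks (a b c : ℕ) : Set (ButterflyV a b c) :=
  some '' {i : Fin (a + b + c + 1) | Even (i : ℕ)}

theorem butterfly_mem_evenMarks_iff_of_adj {U : Set (ButterflyV a b c)} (hv : none ∉ U) :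
    ∀ x ∈ U, ∀ y ∈ U, (butterfly a b c).Adj x y →
      (x ∈ butterflyEvenMarks a b c ↔ y ∉ butterflyEvenMarks a b c) := by
  rintro (_ | i) hx (_ | j) hy hxy
  iterate 3 contradiction
  rw [butterfly_adj_some_some] at hxy
  simp only [butterflyEvenMarks, (Option.some_injective _).mem_set_image, Set.mem_ofPred_eq]
  rcases hxy with h | h <;> simp [h, Nat.even_add_one]

/-- Marks alternating along the inner vertices of `P₁` and of `P₃` and containing all four ends
`a_2, a_{k-1}, c_2, c_{m-1}` of these two paths, the vertices outside `N[v]` with a neighbour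
in `N(v)`. -/
def butterflyMarks (a b c : ℕ) : Set (ButterflyV a b c) :=
  some '' {i : Fin (a + b + c + 1) | (i : ℕ) < a ∧ Odd (i : ℕ) ∨
    a + b < i ∧ Even (i : ℕ)}

theorem butterfly_mem_marks_iff_of_adj : ∀ x y, (butterfly a b c).Adj x y →
    ¬ (butterfly a b c).Adj none x → ¬ (butterfly a b c).Adj none y →
      (x ∈ butterflyMarks a b c ↔ y ∉ butterflyMarks a b c) := by
  rintro (_ | i) (_ | j) hxy hvx hvy
  iterate 2 contradiction
  · exact absurd hxy.symm hvx
  rw [butterfly_adj_some_some] at hxy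
  rw [butterfly_adj_none_some] at hvx hvy
  simp only [butterflyMarks, (Option.some_injective _).mem_set_image, Set.mem_ofPred_eq,
    Nat.odd_iff, Nat.even_iff]
  omega

theorem butterfly_mem_marks_of_adj_head_adj (ha2 : 2 ≤ a) (hae : Even a) (hbo : Odd b)
    (hc2 : 2 ≤ c) (hce : Even c) : ∀ x y, x ≠ none → (butterfly a b c).Adj x y →
      ¬ (butterfly a b c).Adj none x → (butterfly a b c).Adj none y →
        x ∈ butterflyMarks a b c := by
  rintro (_ | i) (_ | j) hx hxy hvx hvy
  iterate 2 contradiction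
  · exact absurd hvy (butterfly a b c).irrefl
  rw [butterfly_adj_some_some] at hxy
  rw [butterfly_adj_none_some] at hvx hvy
  simp only [butterflyMarks, (Option.some_injective _).mem_set_image, Set.mem_ofPred_eq,
    Nat.odd_iff, Nat.even_iff]
  rw [Nat.even_iff] at hae hce
  rw [Nat.odd_iff] at hbo
  have := i.isLt
  omega

end Butterfly

theorem butterfly_stronglyPerfect (a b c : ℕ) (ha2 : 2 ≤ a) (hae : Even a)
    (hbo : Odd b) (hc2 : 2 ≤ c) (hce : Even c) :
    StronglyPerfect (butterfly a b c) := by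
  intro U
  by_cases hv : none ∈ U
  · exact ⟨_, strongStableOn_insert_markedOrIsolated hv butterfly_mem_marks_iff_of_adj
      (butterfly_mem_marks_of_adj_head_adj ha2 hae hbo hc2 hce)⟩
  · exact ⟨_, strongStableOn_markedOrIsolated (butterfly_mem_evenMarks_iff_of_adj hv)⟩
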